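/- For every clone structure 𝒞 over a finite set C there exists a single-crossing preference profile R over C such that 𝒞 = 𝒞(R). -/

import Mathlib

variable {α : Type*}

/-- `r` is a strict linear order (complete, transitive, antisymmetric) on the set `C`. -/
def IsLinOn (C : Set α) (r : α → α → Prop) : Prop :=
  (∀ a ∈ C, ¬r a a) ∧
    (∀ a ∈ C, ∀ b ∈ C, ∀ c ∈ C, r a b → r b c → r a c) ∧
      ∀ a ∈ C, ∀ b ∈ C, a ≠ b → r a b ∨ r b a

/-- A preference profile over `C`: a (nonempty) finite tuple of linear orders on `C`. -/
def IsProfile (C : Set α) {n : ℕ} (R : Fin n → α → α → Prop) : Prop :=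
  0 < n ∧ ∀ i, IsLinOn C (R i)

/-- `X` is a clone set for the profile `R` over `C`. -/
def IsCloneSet (C : Set α) {n : ℕ} (R : Fin n → α → α → Prop) (X : Set α) : Prop :=
  X.Nonempty ∧ X ⊆ C ∧
    ∀ c ∈ X, ∀ c' ∈ X, ∀ a ∈ C \ X, ∀ i, (R i c a ↔ R i c' a)

/-- The clone structure of `R`: the family of all clone sets. -/
def cloneSets (C : Set α) {n : ℕ} (R : Fin n → α → α → Prop) : Set (Set α) :=
  {X | IsCloneSet C R X}

/-- `X` and `Y` intersect non-trivially. -/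
def Bowtie (X Y : Set α) : Prop :=
  (X ∩ Y).Nonempty ∧ (X \ Y).Nonempty ∧ (Y \ X).Nonempty

/-- `𝓒` is a clone structure over `C`. -/
def IsCloneStructure (C : Set α) (𝓒 : Set (Set α)) : Prop :=
  ∃ (n : ℕ) (R : Fin n → α → α → Prop), IsProfile C R ∧ 𝓒 = cloneSets C R

/-- The profile `R` over `C` is single-crossing: there is a linear order on the
voters such that for every pair of distinct candidates, the voters preferring
one of them all precede the voters preferring the other. -/
def SingleCrossing (C : Set α) {n : ℕ} (R : Fin n → α → α → Prop) : Prop :=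
  ∃ vlt : Fin n → Fin n → Prop, IsLinOn (Set.univ : Set (Fin n)) vlt ∧
    ∀ c ∈ C, ∀ d ∈ C, c ≠ d →
      ((∀ i j, R i c d → R j d c → vlt i j) ∨
        (∀ i j, R i d c → R j c d → vlt i j))

/-!
Fix the order `L` of one voter; every clone set is an `L`-interval. The strong clones (clone
sets overlapping no clone set) form a tree, whose nodes are Q-nodes (unions of two overlapping
clones) or prime nodes. Reverse `L` pair by pair: the pair `{c, d}` flips at a time determined by
the least strong clone `N` containing it, larger nodes later; inside a Q-node all pairs flip at
once, inside a prime node the pairs from children `K ≠ K'` flip at time `pos K + pos K'`. When `d`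
lies between `c` and `e`, the flip time of `{c, e}` lies between those of `{c, d}` and `{d, e}`,
so every intermediate order is linear and the profile they form is single-crossing. Its clone
sets are the `L`-intervals `X` whose flip times with each outside candidate do not depend on the
member of `X`, and these are the clone sets of `R`: in a prime node the flip times separate the
children, and in a Q-node every `L`-interval of children is a clone, as one sees by shrinking a
minimal clone that covers two adjacent children.
-/

namespace IsLinOn

variable {β : Type*} {S : Set β} {r : β → β → Prop} {a b : β}

lemma asymm (h : IsLinOn S r) (ha : a ∈ S) (hb : b ∈ S) (hab : r a b) : ¬r b a :=
  fun hba => h.1 a ha (h.2.1 a ha b hb a ha hab hba)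

lemma ne (h : IsLinOn S r) (ha : a ∈ S) (hab : r a b) : a ≠ b := by
  rintro rfl
  exact h.1 a ha hab

lemma rel_or_rel (h : IsLinOn S r) (ha : a ∈ S) (hb : b ∈ S) (hab : a ≠ b) : r a b ∨ r b a :=
  h.2.2 a ha b hb hab

lemma not_rel_iff (h : IsLinOn S r) (ha : a ∈ S) (hb : b ∈ S) (hab : a ≠ b) :
    ¬r a b ↔ r b a :=
  ⟨fun h' => (h.rel_or_rel ha hb hab).resolve_left h', h.asymm hb ha⟩

lemma mem_of_between {X : Set β} (h : IsLinOn S r) (hXS : X ⊆ S)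
    (hX : ∀ a ∈ X, ∀ b ∈ X, ∀ y ∈ S \ X, (r a y ↔ r b y)) {z : β} (ha : a ∈ X) (hb : b ∈ X)
    (hz : z ∈ S) (haz : r a z) (hzb : r z b) : z ∈ X := by
  by_contra hzX
  exact h.asymm hz (hXS hb) hzb ((hX a ha b hb z ⟨hz, hzX⟩).1 haz)

end IsLinOn

section Rank

variable {β : Type*} {S : Set β} {r : β → β → Prop} {x y : β}

noncomputable def rank (S : Set β) (r : β → β → Prop) (x : β) : ℕ :=
  {y ∈ S | r y x}.ncard

lemma rank_lt_rank (h : IsLinOn S r) (hS : S.Finite) (hx : x ∈ S) (hy : y ∈ S) (hxy : r x y) :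
    rank S r x < rank S r y :=
  Set.ncard_lt_ncard
    ⟨fun z hz => ⟨hz.1, h.2.1 z hz.1 x hx y hy hz.2 hxy⟩, fun hsub => h.1 x hx (hsub ⟨hx, hxy⟩).2⟩
    (hS.subset (Set.sep_subset _ _))

lemma rank_lt_rank_iff (h : IsLinOn S r) (hS : S.Finite) (hx : x ∈ S) (hy : y ∈ S) :
    rank S r x < rank S r y ↔ r x y := by
  refine ⟨fun hlt => ?_, rank_lt_rank h hS hx hy⟩
  by_contra hxy
  rcases eq_or_ne y x with rfl | hne
  · exact lt_irrefl _ hlt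
  · exact (rank_lt_rank h hS hy hx ((h.not_rel_iff hx hy hne.symm).1 hxy)).not_gt hlt

lemma rank_injOn (h : IsLinOn S r) (hS : S.Finite) : Set.InjOn (rank S r) S := by
  intro x hx y hy hxy
  by_contra hne
  rcases h.rel_or_rel hx hy hne with h' | h'
  · exact (rank_lt_rank h hS hx hy h').ne hxy
  · exact (rank_lt_rank h hS hy hx h').ne hxy.symm

lemma rank_lt_ncard (h : IsLinOn S r) (hS : S.Finite) (hx : x ∈ S) : rank S r x < S.ncard :=
  Set.ncard_lt_ncard ⟨Set.sep_subset _ _, fun hsub => h.1 x hx (hsub hx).2⟩ hS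

lemma exists_rank_eq (h : IsLinOn S r) (hS : S.Finite) {i : ℕ} (hi : i < S.ncard) :
    ∃ x ∈ S, rank S r x = i := by
  have himage : rank S r '' S = Set.Iio S.ncard := by
    refine Set.eq_of_subset_of_ncard_le ?_ ?_ (Set.finite_Iio _)
    · rintro _ ⟨x, hx, rfl⟩
      exact rank_lt_ncard h hS hx
    · rw [Set.ncard_Iio_nat, (rank_injOn h hS).ncard_image]
  obtain ⟨x, hx, rfl⟩ : i ∈ rank S r '' S := himage ▸ hi
  exact ⟨x, hx, rfl⟩

end Rank

section FlippedProfile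

variable {C : Set α} {L : α → α → Prop} {τ : α → α → ℕ}

def flippedOrder (L : α → α → Prop) (τ : α → α → ℕ) (t : ℕ) (c d : α) : Prop :=
  (L c d ∧ t ≤ τ c d) ∨ (L d c ∧ τ c d < t)

lemma flippedOrder_iff (hL : IsLinOn C L) {t : ℕ} {c d : α} (hc : c ∈ C) (hd : d ∈ C)
    (hcd : c ≠ d) : flippedOrder L τ t c d ↔ (L c d ↔ t ≤ τ c d) := by
  rcases hL.rel_or_rel hc hd hcd with h | h
  · simp [flippedOrder, h, hL.asymm hc hd h]
  · simp [flippedOrder, h, hL.asymm hd hc h]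

lemma flippedOrder_isLinOn (hL : IsLinOn C L) (hτ : ∀ c d, τ c d = τ d c)
    (hbtw : ∀ c ∈ C, ∀ d ∈ C, ∀ e ∈ C, L c d → L d e →
      min (τ c d) (τ d e) ≤ τ c e ∧ τ c e ≤ max (τ c d) (τ d e)) (t : ℕ) :
    IsLinOn C (flippedOrder L τ t) := by
  have hirrefl : ∀ c ∈ C, ¬flippedOrder L τ t c c := by
    rintro c hc (h | h) <;> exact hL.1 c hc h.1
  have hne : ∀ {c d}, c ∈ C → flippedOrder L τ t c d → c ≠ d :=
    fun hc h he => hirrefl _ hc (he ▸ h)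
  have hiff : ∀ {c d}, c ∈ C → d ∈ C → c ≠ d →
      (flippedOrder L τ t d c ↔ ¬flippedOrder L τ t c d) := by
    intro c d hc hd hcd
    rw [flippedOrder_iff hL hd hc hcd.symm, flippedOrder_iff hL hc hd hcd, hτ d c,
      ← hL.not_rel_iff hc hd hcd]
    tauto
  -- over an `L`-chain `x < y < z`, both 3-cycles contradict the betweenness of the flip times
  have hacyclic : ∀ x ∈ C, ∀ y ∈ C, ∀ z ∈ C, L x y → L y z →
      ¬(flippedOrder L τ t x y ∧ flippedOrder L τ t y z ∧ flippedOrder L τ t z x) ∧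
        ¬(flippedOrder L τ t x z ∧ flippedOrder L τ t z y ∧ flippedOrder L τ t y x) := by
    intro x hx y hy z hz hxy hyz
    have hxz := hL.2.1 x hx y hy z hz hxy hyz
    simp only [flippedOrder_iff hL hx hy (hL.ne hx hxy), flippedOrder_iff hL hy hz (hL.ne hy hyz),
      flippedOrder_iff hL hz hx (hL.ne hx hxz).symm, flippedOrder_iff hL hx hz (hL.ne hx hxz),
      flippedOrder_iff hL hz hy (hL.ne hy hyz).symm, flippedOrder_iff hL hy hx (hL.ne hx hxy).symm,
      hxy, hyz, hxz, hL.asymm hx hy hxy, hL.asymm hy hz hyz, hL.asymm hx hz hxz, hτ z x, hτ z y,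
      hτ y x, true_iff, false_iff, not_le]
    have := hbtw x hx y hy z hz hxy hyz
    omega
  refine ⟨hirrefl, fun a ha b hb c hc hab hbc => ?_,
    fun c hc d hd hcd => (em _).imp_right (hiff hc hd hcd).2⟩
  have hac : a ≠ c := by
    rintro rfl
    exact (hiff ha hb (hne ha hab)).1 hbc hab
  by_contra hac'
  have hca := (hiff ha hc hac).2 hac'
  rcases hL.rel_or_rel ha hb (hne ha hab) with h1 | h1 <;>
    rcases hL.rel_or_rel hb hc (hne hb hbc) with h2 | h2 <;>
    rcases hL.rel_or_rel ha hc hac with h3 | h3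
  · exact (hacyclic a ha b hb c hc h1 h2).1 ⟨hab, hbc, hca⟩
  · exact hL.asymm ha hc (hL.2.1 a ha b hb c hc h1 h2) h3
  · exact (hacyclic a ha c hc b hb h3 h2).2 ⟨hab, hbc, hca⟩
  · exact (hacyclic c hc a ha b hb h3 h1).1 ⟨hca, hab, hbc⟩
  · exact (hacyclic b hb a ha c hc h1 h3).2 ⟨hbc, hca, hab⟩
  · exact (hacyclic b hb c hc a ha h2 h3).1 ⟨hbc, hca, hab⟩
  · exact hL.asymm hc ha (hL.2.1 c hc b hb a ha h2 h1) h3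
  · exact (hacyclic c hc b hb a ha h2 h1).2 ⟨hca, hab, hbc⟩

lemma flippedOrder_singleCrossing (hL : IsLinOn C L) (hτ : ∀ c d, τ c d = τ d c) (m : ℕ) :
    SingleCrossing C (fun t : Fin m => flippedOrder L τ t) := by
  refine ⟨(· < ·), ⟨fun i _ => lt_irrefl i, fun i _ j _ k _ => lt_trans,
    fun i _ j _ => lt_or_gt_of_ne⟩, fun c hc d hd hcd => ?_⟩
  have key : ∀ {c d}, c ∈ C → d ∈ C → c ≠ d → L c d → ∀ i j : Fin m,
      flippedOrder L τ i c d → flippedOrder L τ j d c → i < j := by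
    intro c d hc hd hcd h i j hi hj
    rw [flippedOrder_iff hL hc hd hcd] at hi
    rw [flippedOrder_iff hL hd hc hcd.symm, hτ d c] at hj
    have := hi.1 h
    have := mt hj.2 (hL.asymm hc hd h)
    exact Fin.lt_def.2 (by omega)
  rcases hL.rel_or_rel hc hd hcd with h | h
  · exact Or.inl (key hc hd hcd h)
  · exact Or.inr (key hd hc hcd.symm h)

lemma isCloneSet_flippedOrder_iff (hL : IsLinOn C L) {m : ℕ} (hm : ∀ c ∈ C, ∀ d ∈ C, τ c d < m)
    {X : Set α} :
    IsCloneSet C (fun t : Fin (m + 1) => flippedOrder L τ t) X ↔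
      X.Nonempty ∧ X ⊆ C ∧ ∀ a ∈ X, ∀ b ∈ X, ∀ y ∈ C \ X, (L a y ↔ L b y) ∧ τ a y = τ b y := by
  refine and_congr_right fun _ => and_congr_right fun hXC => ?_
  refine forall₂_congr fun a ha => forall₂_congr fun b hb => forall₂_congr fun y hy => ?_
  have hay : a ≠ y := fun h => hy.2 (h ▸ ha)
  have hby : b ≠ y := fun h => hy.2 (h ▸ hb)
  simp only [flippedOrder_iff hL (hXC ha) hy.1 hay, flippedOrder_iff hL (hXC hb) hy.1 hby]
  constructor
  · intro h
    have h0 := h 0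
    simp only [Fin.val_zero, zero_le, iff_true] at h0
    have ht : ∀ t : Fin (m + 1), (t : ℕ) ≤ τ a y ↔ (t : ℕ) ≤ τ b y := by
      intro t
      have := h t
      rw [h0] at this
      tauto
    have ha' := ht ⟨τ a y + 1, Nat.succ_lt_succ (hm a (hXC ha) y hy.1)⟩
    have hb' := ht ⟨τ b y + 1, Nat.succ_lt_succ (hm b (hXC hb) y hy.1)⟩
    simp only at ha' hb'
    exact ⟨h0, by omega⟩
  · rintro ⟨h1, h2⟩ t
    rw [h1, h2]

end FlippedProfile

/-- `[a, b]` and `[c, d]` overlap, with `[a, b]` reaching further left and `[c, d]` further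
right. -/
def Crosses (a b c d : ℕ) : Prop :=
  a < c ∧ c ≤ b ∧ b < d

/-- Abstracts `T a b` = "the children number `a` to `b` of a node with `k` children, in the
order of one voter, together form a clone". -/
structure IntervalFamily (k : ℕ) (T : ℕ → ℕ → Prop) : Prop where
  single : ∀ i < k, T i i
  inter : ∀ {a b c d}, T a b → T c d → Crosses a b c d → T c b
  diff_left : ∀ {a b c d}, T a b → T c d → Crosses a b c d → T a (c - 1)
  diff_right : ∀ {a b c d}, T a b → T c d → Crosses a b c d → T (b + 1) d
  union : ∀ {a b c d}, T a b → T c d → Crosses a b c d → T a d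
  crossed : ∀ {a b}, T a b → a < b → b - a + 1 < k →
    ∃ c d, T c d ∧ (Crosses a b c d ∨ Crosses c d a b)

namespace IntervalFamily

variable {k : ℕ} {T : ℕ → ℕ → Prop}

lemma split_or_exists_shorter (H : IntervalFamily k T) {a b x : ℕ} (hab : T a b) (hax : a ≤ x)
    (hxb : x < b) (hk : b - a + 1 < k) :
    (T a x ∧ T (x + 1) b) ∨ ∃ a' b', T a' b' ∧ a' ≤ x ∧ x < b' ∧ b' - a' < b - a := by
  obtain ⟨c, d, hcd, hcr | hcr⟩ := H.crossed hab (by omega) hk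
  · have hin := H.inter hab hcd hcr
    have hout := H.diff_left hab hcd hcr
    obtain ⟨h1, h2, h3⟩ := hcr
    by_cases hc : c = x + 1
    · subst hc
      exact Or.inl ⟨hout, hin⟩
    by_cases hcx : c ≤ x
    · exact Or.inr ⟨c, b, hin, hcx, hxb, by omega⟩
    · exact Or.inr ⟨a, c - 1, hout, hax, by omega, by omega⟩
  · have hin := H.inter hcd hab hcr
    have hout := H.diff_right hcd hab hcr
    obtain ⟨h1, h2, h3⟩ := hcr
    by_cases hd : d = x
    · subst hd
      exact Or.inl ⟨hin, hout⟩
    by_cases hdx : x < d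
    · exact Or.inr ⟨a, d, hin, hax, hdx, by omega⟩
    · exact Or.inr ⟨d + 1, b, hout, by omega, hxb, by omega⟩

lemma adjacent_of_cover (H : IntervalFamily k T) {a b x : ℕ} (hab : T a b) (hax : a ≤ x)
    (hxb : x < b) (hk : b - a + 1 < k) : T x (x + 1) := by
  induction hn : b - a using Nat.strong_induction_on generalizing a b with
  | _ n ih =>
  have shorter : ∀ a' b', T a' b' → a' ≤ x → x < b' → b' - a' < b - a → T x (x + 1) :=
    fun a' b' h h1 h2 h3 => ih _ (by omega) h h1 h2 (by omega) rfl
  obtain ⟨hleft, hright⟩ | ⟨a', b', h, h1, h2, h3⟩ := H.split_or_exists_shorter hab hax hxb hk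
  swap
  · exact shorter a' b' h h1 h2 h3
  -- a member crossing a nontrivial piece yields a shorter member through `x` and `x + 1`
  by_cases hb : x + 1 < b
  · obtain ⟨c, d, hcd, ⟨h1, h2, h3⟩ | ⟨h1, h2, h3⟩⟩ := H.crossed hright hb (by omega)
    · exact shorter a (c - 1) (H.diff_left hab hcd ⟨by omega, h2, h3⟩) hax (by omega) (by omega)
    · by_cases hca : c < a
      · exact shorter a d (H.inter hcd hab ⟨hca, by omega, h3⟩) hax (by omega) (by omega)
      · exact shorter c d hcd (by omega) (by omega) (by omega)
  by_cases ha : a < x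
  · obtain ⟨c, d, hcd, ⟨h1, h2, h3⟩ | ⟨h1, h2, h3⟩⟩ := H.crossed hleft ha (by omega)
    · by_cases hdb : b < d
      · exact shorter c b (H.inter hab hcd ⟨h1, by omega, hdb⟩) (by omega) hxb (by omega)
      · exact shorter c d hcd (by omega) (by omega) (by omega)
    · exact shorter (d + 1) b (H.diff_right hcd hab ⟨h1, h2, by omega⟩) (by omega) hxb
        (by omega)
  obtain rfl : a = x := by omega
  obtain rfl : b = a + 1 := by omega
  exact hab

lemma mem_of_cover (H : IntervalFamily k T)
    (hcover : ∀ x, x + 1 < k → ∃ a b, T a b ∧ a ≤ x ∧ x < b ∧ b - a + 1 < k)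
    {a b : ℕ} (hab : a ≤ b) (hb : b < k) : T a b := by
  induction b, hab using Nat.le_induction with
  | base => exact H.single a (by omega)
  | succ b hab ih =>
    obtain ⟨a', b', h, h1, h2, h3⟩ := hcover b hb
    have hadj := H.adjacent_of_cover h h1 h2 h3
    rcases hab.eq_or_lt with rfl | hlt
    · exact hadj
    · exact H.union (ih (by omega)) hadj ⟨hlt, le_rfl, by omega⟩

lemma mem_of_crosses (H : IntervalFamily k T) {a b c d : ℕ} (hab : T a b) (hcd : T c d)
    (h : Crosses a b c d) (hd : d < k) (hcov : ∀ j < k, (a ≤ j ∧ j ≤ b) ∨ (c ≤ j ∧ j ≤ d))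
    {x y : ℕ} (hxy : x ≤ y) (hy : y < k) : T x y := by
  obtain ⟨h₁, h₂, h₃⟩ := h
  refine H.mem_of_cover (fun z hz => ?_) hxy hy
  have := hcov z (by omega)
  have := hcov (z + 1) hz
  by_cases hzb : z < b
  · exact ⟨a, b, hab, by omega, hzb, by omega⟩
  · exact ⟨c, d, hcd, by omega, by omega, by omega⟩

end IntervalFamily

lemma Bowtie.symm {X Y : Set α} (h : Bowtie X Y) : Bowtie Y X :=
  ⟨Set.inter_comm X Y ▸ h.1, h.2.2, h.2.1⟩

namespace IsCloneSet

variable {C : Set α} {n : ℕ} {R : Fin n → α → α → Prop} {X Y : Set α}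

lemma singleton {x : α} (hx : x ∈ C) : IsCloneSet C R {x} := by
  refine ⟨Set.singleton_nonempty x, Set.singleton_subset_iff.2 hx, ?_⟩
  rintro c rfl c' rfl - - i
  rfl

lemma self (hC : C.Nonempty) : IsCloneSet C R C :=
  ⟨hC, subset_rfl, fun _ _ _ _ _ ha => absurd ha.1 ha.2⟩

lemma inter (hX : IsCloneSet C R X) (hY : IsCloneSet C R Y) (hne : (X ∩ Y).Nonempty) :
    IsCloneSet C R (X ∩ Y) := by
  refine ⟨hne, Set.inter_subset_left.trans hX.2.1, ?_⟩
  rintro c hc c' hc' a ⟨haC, ha⟩ i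
  by_cases haX : a ∈ X
  · exact hY.2.2 c hc.2 c' hc'.2 a ⟨haC, fun haY => ha ⟨haX, haY⟩⟩ i
  · exact hX.2.2 c hc.1 c' hc'.1 a ⟨haC, haX⟩ i

lemma union (hX : IsCloneSet C R X) (hY : IsCloneSet C R Y) (hne : (X ∩ Y).Nonempty) :
    IsCloneSet C R (X ∪ Y) := by
  obtain ⟨w, hwX, hwY⟩ := hne
  refine ⟨⟨w, Or.inl hwX⟩, Set.union_subset hX.2.1 hY.2.1, ?_⟩
  rintro c hc c' hc' a ⟨haC, ha⟩ i
  have key : ∀ z ∈ X ∪ Y, (R i z a ↔ R i w a) := by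
    rintro z (hz | hz)
    · exact hX.2.2 z hz w hwX a ⟨haC, fun h => ha (Or.inl h)⟩ i
    · exact hY.2.2 z hz w hwY a ⟨haC, fun h => ha (Or.inr h)⟩ i
  rw [key c hc, key c' hc']

lemma rel_iff_rel_of_notMem (hR : IsProfile C R) (hX : IsCloneSet C R X) {a c c' : α}
    (ha : a ∈ C) (haX : a ∉ X) (hc : c ∈ X) (hc' : c' ∈ X) (i : Fin n) :
    R i a c ↔ R i a c' := by
  have hac : a ≠ c := fun h => haX (h ▸ hc)
  have hac' : a ≠ c' := fun h => haX (h ▸ hc')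
  rw [← (hR.2 i).not_rel_iff (hX.2.1 hc) ha hac.symm,
    ← (hR.2 i).not_rel_iff (hX.2.1 hc') ha hac'.symm, hX.2.2 c hc c' hc' a ⟨ha, haX⟩ i]

lemma diff (hR : IsProfile C R) (hX : IsCloneSet C R X) (hY : IsCloneSet C R Y)
    (hXY : Bowtie X Y) : IsCloneSet C R (X \ Y) := by
  obtain ⟨⟨w, hwX, hwY⟩, hne, ⟨z, hzY, hzX⟩⟩ := hXY
  refine ⟨hne, Set.sdiff_subset.trans hX.2.1, ?_⟩
  rintro c ⟨hcX, hcY⟩ c' ⟨hc'X, hc'Y⟩ a ⟨haC, ha⟩ i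
  by_cases haX : a ∈ X
  · -- `a ∈ X ∩ Y`: compare `c` and `c'` with `a` through `z ∈ Y \ X`
    have haY : a ∈ Y := not_not.1 fun h => ha ⟨haX, h⟩
    rw [hY.rel_iff_rel_of_notMem hR (hX.2.1 hcX) hcY haY hzY i,
      hX.2.2 c hcX c' hc'X z ⟨hY.2.1 hzY, hzX⟩ i,
      ← hY.rel_iff_rel_of_notMem hR (hX.2.1 hc'X) hc'Y haY hzY i]
  · exact hX.2.2 c hcX c' hc'X a ⟨haC, haX⟩ i

lemma separated (hR : IsProfile C R) (hX : IsCloneSet C R X) (hY : IsCloneSet C R Y)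
    (hXY : Disjoint X Y) (i : Fin n) :
    (∀ x ∈ X, ∀ y ∈ Y, R i x y) ∨ ∀ x ∈ X, ∀ y ∈ Y, R i y x := by
  obtain ⟨x₀, hx₀⟩ := hX.1
  obtain ⟨y₀, hy₀⟩ := hY.1
  have key : ∀ x ∈ X, ∀ y ∈ Y, R i x y ↔ R i x₀ y₀ := fun x hx y hy =>
    (hY.rel_iff_rel_of_notMem hR (hX.2.1 hx) (hXY.notMem_of_mem_left hx) hy hy₀ i).trans
      (hX.2.2 x hx x₀ hx₀ y₀ ⟨hY.2.1 hy₀, hXY.notMem_of_mem_right hy₀⟩ i)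
  by_cases h : R i x₀ y₀
  · exact Or.inl fun x hx y hy => (key x hx y hy).2 h
  · refine Or.inr fun x hx y hy => ?_
    have hxy : x ≠ y := fun he => hXY.notMem_of_mem_left hx (he ▸ hy)
    rw [← (hR.2 i).not_rel_iff (hX.2.1 hx) (hY.2.1 hy) hxy, key x hx y hy]
    exact h

end IsCloneSet

/-- The strong clones are the nodes of the decomposition tree of `𝒞(R)`. -/
def IsStrongClone (C : Set α) {n : ℕ} (R : Fin n → α → α → Prop) (X : Set α) : Prop :=
  IsCloneSet C R X ∧ ∀ Y, IsCloneSet C R Y → ¬Bowtie X Y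

def strongHull (C : Set α) {n : ℕ} (R : Fin n → α → α → Prop) (S : Set α) : Set α :=
  ⋂₀ {P | IsStrongClone C R P ∧ S ⊆ P}

/-- The child of the node `N` through `x` (junk unless `x ∈ N` and `N` is not a singleton). -/
def child (C : Set α) {n : ℕ} (R : Fin n → α → α → Prop) (N : Set α) (x : α) : Set α :=
  ⋃₀ {W | IsStrongClone C R W ∧ x ∈ W ∧ W ⊂ N}

section StrongClone

variable {C : Set α} {n : ℕ} {R : Fin n → α → α → Prop} {N S W X Y : Set α} {x y : α}

namespace IsStrongClone

lemma singleton (hx : x ∈ C) : IsStrongClone C R {x} := by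
  refine ⟨.singleton hx, fun Y _ ⟨⟨u, hu, huY⟩, ⟨v, hv, hvY⟩, _⟩ => ?_⟩
  rw [Set.mem_singleton_iff] at hu hv
  exact hvY (hv ▸ hu ▸ huY)

lemma self (hC : C.Nonempty) : IsStrongClone C R C :=
  ⟨.self hC, fun _ hY ⟨_, _, ⟨_, hvY, hvC⟩⟩ => hvC (hY.2.1 hvY)⟩

lemma subset_or_subset (hN : IsStrongClone C R N) (hY : IsCloneSet C R Y)
    (hNY : (N ∩ Y).Nonempty) : N ⊆ Y ∨ Y ⊆ N := by
  by_contra h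
  simp only [not_or, Set.not_subset] at h
  obtain ⟨⟨u, huN, huY⟩, ⟨v, hvY, hvN⟩⟩ := h
  exact hN.2 Y hY ⟨hNY, ⟨u, huN, huY⟩, ⟨v, hvY, hvN⟩⟩

end IsStrongClone

lemma setOf_isStrongClone_finite (hC : C.Finite) : {X | IsStrongClone C R X}.Finite :=
  hC.finite_subsets.subset fun _ hX => hX.1.2.1

lemma subset_strongHull : S ⊆ strongHull C R S :=
  Set.subset_sInter fun _ hP => hP.2

lemma strongHull_subset (hN : IsStrongClone C R N) (hSN : S ⊆ N) : strongHull C R S ⊆ N :=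
  Set.sInter_subset_of_mem ⟨hN, hSN⟩

lemma isStrongClone_strongHull (hC : C.Finite) (hS : S.Nonempty) (hSC : S ⊆ C) :
    IsStrongClone C R (strongHull C R S) := by
  obtain ⟨s, hs⟩ := hS
  obtain ⟨M, ⟨hM, hSM⟩, hmin⟩ :=
    Set.Finite.exists_minimal (s := {P | IsStrongClone C R P ∧ S ⊆ P})
      ((setOf_isStrongClone_finite (R := R) hC).subset fun _ hP => hP.1)
    ⟨C, IsStrongClone.self ⟨s, hSC hs⟩, hSC⟩
  have hMN : ∀ N, IsStrongClone C R N → S ⊆ N → M ⊆ N := fun N hN hSN =>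
    (hM.subset_or_subset hN.1 ⟨s, hSM hs, hSN hs⟩).elim id fun h => hmin ⟨hN, hSN⟩ h
  rwa [(strongHull_subset hM hSM).antisymm (Set.subset_sInter fun N hN => hMN N hN.1 hN.2)]

lemma subset_child (hW : IsStrongClone C R W) (hxW : x ∈ W) (hWN : W ⊂ N) :
    W ⊆ child C R N x :=
  Set.subset_sUnion_of_mem ⟨hW, hxW, hWN⟩

lemma child_spec (hC : C.Finite) (hN : IsStrongClone C R N) (hNt : N.Nontrivial) (hx : x ∈ N) :
    IsStrongClone C R (child C R N x) ∧ x ∈ child C R N x ∧ child C R N x ⊂ N := by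
  have hxN : {x} ⊂ N :=
    (Set.singleton_subset_iff.2 hx).ssubset_of_not_subset hNt.not_subset_singleton
  obtain ⟨M, ⟨hM, hxM, hMN⟩, hmax⟩ :=
    Set.Finite.exists_maximal (s := {W | IsStrongClone C R W ∧ x ∈ W ∧ W ⊂ N})
      ((setOf_isStrongClone_finite (R := R) hC).subset fun _ hW => hW.1)
      ⟨{x}, IsStrongClone.singleton (hN.1.2.1 hx), rfl, hxN⟩
  have hWM : ∀ W, IsStrongClone C R W → x ∈ W → W ⊂ N → W ⊆ M := fun W hW hxW hWN =>
    (hM.subset_or_subset hW.1 ⟨x, hxM, hxW⟩).elim (fun h => hmax ⟨hW, hxW, hWN⟩ h) id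
  rw [show child C R N x = M from (Set.sUnion_subset fun W hW => hWM W hW.1 hW.2.1 hW.2.2).antisymm
    (subset_child hM hxM hMN)]
  exact ⟨hM, hxM, hMN⟩

end StrongClone

/-- For a strong clone `N`: `N` is a Q-node of the PQ-tree of `𝒞(R)`. -/
def IsQNode (C : Set α) {n : ℕ} (R : Fin n → α → α → Prop) (N : Set α) : Prop :=
  ∃ Y Z, IsCloneSet C R Y ∧ IsCloneSet C R Z ∧ Bowtie Y Z ∧ Y ∪ Z = N

def Precedes (L : α → α → Prop) (K K' : Set α) : Prop :=
  ∀ u ∈ K, ∀ v ∈ K', L u v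

def children (C : Set α) {n : ℕ} (R : Fin n → α → α → Prop) (N : Set α) : Set (Set α) :=
  child C R N '' N

noncomputable def childIndex (C : Set α) {n : ℕ} (R : Fin n → α → α → Prop) (i : Fin n)
    (N : Set α) (x : α) : ℕ :=
  rank (children C R N) (Precedes (R i)) (child C R N x)

section Children

variable {C : Set α} {n : ℕ} {R : Fin n → α → α → Prop} {N W : Set α} {x y : α}

lemma child_eq_of_mem (hC : C.Finite) (hN : IsStrongClone C R N) (hNt : N.Nontrivial)
    (hx : x ∈ N) (hy : y ∈ child C R N x) : child C R N y = child C R N x := by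
  obtain ⟨hKx, hxK, hKxN⟩ := child_spec hC hN hNt hx
  obtain ⟨hKy, hyK, hKyN⟩ := child_spec hC hN hNt (hKxN.subset hy)
  have hxy : child C R N x ⊆ child C R N y := subset_child hKx hy hKxN
  exact (subset_child hKy (hxy hxK) hKyN).antisymm hxy

lemma subset_child_of_not_isQNode (hC : C.Finite) (hN : IsStrongClone C R N)
    (hQ : ¬IsQNode C R N) (hW : IsCloneSet C R W) (hWN : W ⊂ N) (hx : x ∈ W) :
    W ⊆ child C R N x := by
  obtain ⟨M, ⟨hM, hWM, hMN⟩, hmax⟩ :=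
    Set.Finite.exists_maximal (s := {V | IsCloneSet C R V ∧ W ⊆ V ∧ V ⊂ N})
      (hC.finite_subsets.subset fun _ hV => hV.1.2.1) ⟨W, hW, subset_rfl, hWN⟩
  suffices hMs : IsStrongClone C R M from hWM.trans (subset_child hMs (hWM hx) hMN)
  -- a clone overlapping `M` would enlarge it to a clone strictly inside `N`
  refine ⟨hM, fun Y hY hMY => ?_⟩
  obtain ⟨⟨u, huM, huY⟩, ⟨v, hvM, hvY⟩, ⟨w, hwY, hwM⟩⟩ := hMY
  have hYN : Y ⊆ N := (hN.subset_or_subset hY ⟨u, hMN.subset huM, huY⟩).resolve_left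
    fun h => hvY (h (hMN.subset hvM))
  have hMYN : M ∪ Y ⊂ N := (Set.union_subset hMN.subset hYN).ssubset_of_ne
    fun h => hQ ⟨M, Y, hM, hY, ⟨⟨u, huM, huY⟩, ⟨v, hvM, hvY⟩, ⟨w, hwY, hwM⟩⟩, h⟩
  exact hwM (hmax ⟨hM.union hY ⟨u, huM, huY⟩, hWM.trans Set.subset_union_left, hMYN⟩
    Set.subset_union_left (Or.inr hwY))

lemma isLinOn_children (hR : IsProfile C R) (hC : C.Finite) (hN : IsStrongClone C R N)
    (hNt : N.Nontrivial) (i : Fin n) : IsLinOn (children C R N) (Precedes (R i)) := by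
  have hspec := fun x (hx : x ∈ N) => child_spec hC hN hNt hx
  refine ⟨?_, ?_, ?_⟩
  · rintro _ ⟨x, hx, rfl⟩ h
    have hxK := (hspec x hx).2.1
    exact (hR.2 i).1 x (hN.1.2.1 hx) (h x hxK x hxK)
  · rintro _ ⟨x, hx, rfl⟩ _ ⟨y, hy, rfl⟩ _ ⟨z, hz, rfl⟩ hxy hyz u hu w hw
    have hyK := (hspec y hy).2.1
    have hK : ∀ v ∈ N, child C R N v ⊆ C := fun v hv => (hspec v hv).1.1.2.1
    exact (hR.2 i).2.1 u (hK x hx hu) y (hK y hy hyK) w (hK z hz hw) (hxy u hu y hyK)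
      (hyz y hyK w hw)
  · rintro _ ⟨x, hx, rfl⟩ _ ⟨y, hy, rfl⟩ hxy
    refine (IsCloneSet.separated hR (hspec x hx).1.1 (hspec y hy).1.1 ?_ i).imp id
      fun h u hu v hv => h v hv u hu
    refine Set.disjoint_left.2 fun z hzx hzy => hxy ?_
    rw [← child_eq_of_mem hC hN hNt hx hzx, child_eq_of_mem hC hN hNt hy hzy]

variable (hR : IsProfile C R) (hC : C.Finite) (hN : IsStrongClone C R N) (hNt : N.Nontrivial)
  (i : Fin n)
include hR hC hN hNt

lemma childIndex_lt_childIndex_iff (hx : x ∈ N) (hy : y ∈ N) :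
    childIndex C R i N x < childIndex C R i N y ↔
      Precedes (R i) (child C R N x) (child C R N y) :=
  rank_lt_rank_iff (isLinOn_children hR hC hN hNt i) ((hC.subset hN.1.2.1).image _)
    ⟨x, hx, rfl⟩ ⟨y, hy, rfl⟩

lemma childIndex_eq_childIndex_iff (hx : x ∈ N) (hy : y ∈ N) :
    childIndex C R i N x = childIndex C R i N y ↔ child C R N x = child C R N y :=
  ⟨fun h => rank_injOn (isLinOn_children hR hC hN hNt i) ((hC.subset hN.1.2.1).image _)
    ⟨x, hx, rfl⟩ ⟨y, hy, rfl⟩ h, fun h => by rw [childIndex, h, childIndex]⟩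

lemma childIndex_lt_ncard (hx : x ∈ N) : childIndex C R i N x < (children C R N).ncard :=
  rank_lt_ncard (isLinOn_children hR hC hN hNt i) ((hC.subset hN.1.2.1).image _) ⟨x, hx, rfl⟩

lemma exists_childIndex_eq {j : ℕ} (hj : j < (children C R N).ncard) :
    ∃ x ∈ N, childIndex C R i N x = j := by
  obtain ⟨_, ⟨x, hx, rfl⟩, hxj⟩ :=
    exists_rank_eq (isLinOn_children hR hC hN hNt i) ((hC.subset hN.1.2.1).image _) hj
  exact ⟨x, hx, hxj⟩

lemma rel_of_childIndex_lt (hx : x ∈ N) (hy : y ∈ N)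
    (hxy : childIndex C R i N x < childIndex C R i N y) : R i x y :=
  (childIndex_lt_childIndex_iff hR hC hN hNt i hx hy).1 hxy x (child_spec hC hN hNt hx).2.1 y
    (child_spec hC hN hNt hy).2.1

lemma childIndex_lt_of_rel (hx : x ∈ N) (hy : y ∈ N) (hxy : R i x y)
    (hne : child C R N x ≠ child C R N y) : childIndex C R i N x < childIndex C R i N y := by
  rcases lt_trichotomy (childIndex C R i N x) (childIndex C R i N y) with h | h | h
  · exact h
  · exact absurd ((childIndex_eq_childIndex_iff hR hC hN hNt i hx hy).1 h) hne
  · exact absurd (rel_of_childIndex_lt hR hC hN hNt i hy hx h)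
      ((hR.2 i).asymm (hN.1.2.1 hx) (hN.1.2.1 hy) hxy)

end Children

def childRange (C : Set α) {n : ℕ} (R : Fin n → α → α → Prop) (i : Fin n) (N : Set α)
    (a b : ℕ) : Set α :=
  {z ∈ N | a ≤ childIndex C R i N z ∧ childIndex C R i N z ≤ b}

section QNode

variable {C : Set α} {n : ℕ} {R : Fin n → α → α → Prop} {N X Y : Set α} {x : α} {i : Fin n}
  {a b c d : ℕ}

lemma childRange_inter (h : Crosses a b c d) :
    childRange C R i N a b ∩ childRange C R i N c d = childRange C R i N c b := by
  ext z; by_cases hz : z ∈ N <;> simp [childRange, hz, Crosses] at h ⊢; omega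

lemma childRange_diff_left (h : Crosses a b c d) :
    childRange C R i N a b \ childRange C R i N c d = childRange C R i N a (c - 1) := by
  ext z; by_cases hz : z ∈ N <;> simp [childRange, hz, Crosses] at h ⊢; omega

lemma childRange_diff_right (h : Crosses a b c d) :
    childRange C R i N c d \ childRange C R i N a b = childRange C R i N (b + 1) d := by
  ext z; by_cases hz : z ∈ N <;> simp [childRange, hz, Crosses] at h ⊢; omega

lemma childRange_union (h : Crosses a b c d) :
    childRange C R i N a b ∪ childRange C R i N c d = childRange C R i N a d := by
  ext z; by_cases hz : z ∈ N <;> simp [childRange, hz, Crosses] at h ⊢; omega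

lemma crosses_of_bowtie (h : Bowtie (childRange C R i N a b) (childRange C R i N c d)) :
    Crosses a b c d ∨ Crosses c d a b := by
  obtain ⟨⟨z₁, ⟨-, h₁⟩, ⟨-, h₂⟩⟩, ⟨z₂, ⟨hz₂, h₃⟩, h₄⟩, ⟨z₃, ⟨hz₃, h₅⟩, h₆⟩⟩ := h
  have h₄' : ¬(c ≤ _ ∧ _ ≤ d) := fun h => h₄ ⟨hz₂, h⟩
  have h₆' : ¬(a ≤ _ ∧ _ ≤ b) := fun h => h₆ ⟨hz₃, h⟩
  unfold Crosses
  omega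

variable (hR : IsProfile C R) (hC : C.Finite) (hN : IsStrongClone C R N) (hNt : N.Nontrivial)
include hR hC hN hNt

lemma childRange_childClosed {z : α} (hz : z ∈ childRange C R i N a b) :
    child C R N z ⊆ childRange C R i N a b := by
  intro w hw
  have hwN := (child_spec hC hN hNt hz.1).2.2.subset hw
  have := (childIndex_eq_childIndex_iff hR hC hN hNt i hwN hz.1).2
    (child_eq_of_mem hC hN hNt hz.1 hw)
  exact ⟨hwN, this ▸ hz.2⟩

lemma exists_eq_childRange (hX : X.Nonempty) (hXN : X ⊆ N)
    (hcl : ∀ z ∈ X, child C R N z ⊆ X)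
    (hconv : ∀ a ∈ X, ∀ b ∈ X, ∀ y ∈ C \ X, (R i a y ↔ R i b y)) :
    ∃ a b, b < (children C R N).ncard ∧ X = childRange C R i N a b := by
  have hXfin : X.Finite := (hC.subset hN.1.2.1).subset hXN
  obtain ⟨x₁, hx₁, hmin⟩ := Set.exists_min_image X (childIndex C R i N) hXfin hX
  obtain ⟨x₂, hx₂, hmax⟩ := Set.exists_max_image X (childIndex C R i N) hXfin hX
  refine ⟨_, _, childIndex_lt_ncard hR hC hN hNt i (hXN hx₂),
    Set.Subset.antisymm (fun z hz => ⟨hXN hz, hmin z hz, hmax z hz⟩) fun z ⟨hzN, h₁, h₂⟩ => ?_⟩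
  have hsame : ∀ x ∈ X, childIndex C R i N z = childIndex C R i N x → z ∈ X := fun x hx h =>
    hcl x hx ((childIndex_eq_childIndex_iff hR hC hN hNt i hzN (hXN hx)).1 h ▸
      (child_spec hC hN hNt hzN).2.1)
  rcases h₁.eq_or_lt with h₁ | h₁
  · exact hsame x₁ hx₁ h₁.symm
  rcases h₂.eq_or_lt with h₂ | h₂
  · exact hsame x₂ hx₂ h₂
  exact (hR.2 i).mem_of_between (hXN.trans hN.1.2.1) hconv hx₁ hx₂ (hN.1.2.1 hzN)
    (rel_of_childIndex_lt hR hC hN hNt i (hXN hx₁) hzN h₁)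
    (rel_of_childIndex_lt hR hC hN hNt i hzN (hXN hx₂) h₂)

omit hR in
lemma childClosed_of_overlap (hY : IsCloneSet C R Y) (hYN : Y ⊆ N)
    (hXcl : ∀ z ∈ X, child C R N z ⊆ X) (hXY : (Y ∩ X).Nonempty) (hYX : (Y \ X).Nonempty) :
    ∀ z ∈ Y, child C R N z ⊆ Y := by
  intro z hz
  obtain ⟨hK, hzK, -⟩ := child_spec hC hN hNt (hYN hz)
  refine (hK.subset_or_subset hY ⟨z, hzK, hz⟩).resolve_right fun hYK => ?_
  obtain ⟨w, hwY, hwX⟩ := hXY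
  obtain ⟨v, hvY, hvX⟩ := hYX
  exact hvX (hXcl w hwX (child_eq_of_mem hC hN hNt (hYN hz) (hYK hwY) ▸ hYK hvY))

omit hR in
lemma childClosed_of_bowtie_of_union_eq {Z : Set α} (hY : IsCloneSet C R Y) (hZ : IsCloneSet C R Z)
    (hYZ : Bowtie Y Z) (hN' : Y ∪ Z = N) : ∀ z ∈ Y, child C R N z ⊆ Y := by
  intro z hz
  have hzN : z ∈ N := hN' ▸ Or.inl hz
  obtain ⟨hK, hzK, hKN⟩ := child_spec hC hN hNt hzN
  refine (hK.subset_or_subset hY ⟨z, hzK, hz⟩).resolve_right fun hYK => ?_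
  obtain ⟨⟨u, huY, huZ⟩, ⟨v, hvY, hvZ⟩, -⟩ := hYZ
  rcases hK.subset_or_subset hZ ⟨u, hYK huY, huZ⟩ with hKZ | hZK
  · exact hvZ (hKZ (hYK hvY))
  · exact hKN.not_subset (hN'.symm.subset.trans (Set.union_subset hYK hZK))

lemma childRange_nonempty {j : ℕ} (hj : j < (children C R N).ncard) (haj : a ≤ j) (hjb : j ≤ b) :
    (childRange C R i N a b).Nonempty := by
  obtain ⟨x, hx, rfl⟩ := exists_childIndex_eq hR hC hN hNt i hj
  exact ⟨x, hx, haj, hjb⟩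

lemma bowtie_childRange (h : Crosses a b c d) (hd : d < (children C R N).ncard) :
    Bowtie (childRange C R i N a b) (childRange C R i N c d) := by
  obtain ⟨h₁, h₂, h₃⟩ := h
  refine ⟨?_, ?_, ?_⟩
  · rw [childRange_inter ⟨h₁, h₂, h₃⟩]
    exact childRange_nonempty hR hC hN hNt (j := c) (by omega) le_rfl h₂
  · rw [childRange_diff_left ⟨h₁, h₂, h₃⟩]
    exact childRange_nonempty hR hC hN hNt (j := a) (by omega) le_rfl (by omega)
  · rw [childRange_diff_right ⟨h₁, h₂, h₃⟩]
    exact childRange_nonempty hR hC hN hNt (j := d) hd (by omega) le_rfl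

lemma childRange_childIndex (hx : x ∈ N) :
    childRange C R i N (childIndex C R i N x) (childIndex C R i N x) = child C R N x := by
  ext z
  refine ⟨fun ⟨hz, h₁, h₂⟩ => ?_, fun hz => ?_⟩
  · rw [← (childIndex_eq_childIndex_iff hR hC hN hNt i hz hx).1 (le_antisymm h₂ h₁)]
    exact (child_spec hC hN hNt hz).2.1
  · have hzN := (child_spec hC hN hNt hx).2.2.subset hz
    have := (childIndex_eq_childIndex_iff hR hC hN hNt i hzN hx).2
      (child_eq_of_mem hC hN hNt hx hz)
    exact ⟨hzN, this.ge, this.le⟩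

lemma exists_crosses_childRange (hab : IsCloneSet C R (childRange C R i N a b))
    (hb : b < (children C R N).ncard) (hlt : a < b) (hk : b - a + 1 < (children C R N).ncard) :
    ∃ c d, (d < (children C R N).ncard ∧ IsCloneSet C R (childRange C R i N c d)) ∧
      (Crosses a b c d ∨ Crosses c d a b) := by
  obtain ⟨xa, hxa, rfl⟩ := exists_childIndex_eq hR hC hN hNt i (hlt.trans hb)
  obtain ⟨xb, hxb, rfl⟩ := exists_childIndex_eq hR hC hN hNt i hb
  set X := childRange C R i N (childIndex C R i N xa) (childIndex C R i N xb)
  have hXN : X ⊂ N := by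
    refine ⟨Set.sep_subset _ _, fun hNX => ?_⟩
    rcases (show 0 < childIndex C R i N xa ∨ childIndex C R i N xb + 1 < (children C R N).ncard
      by omega) with h | h
    · obtain ⟨z, hz, hz0⟩ := exists_childIndex_eq hR hC hN hNt i (j := 0) (by omega)
      exact absurd (hNX hz).2.1 (by omega)
    · obtain ⟨z, hz, hzb⟩ := exists_childIndex_eq hR hC hN hNt i h
      exact absurd (hNX hz).2.2 (by omega)
  -- `X` spans at least two children, so it is not strong
  obtain ⟨Y, hY, hXY⟩ : ∃ Y, IsCloneSet C R Y ∧ Bowtie X Y := by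
    by_contra! h
    have hxbK : xb ∈ child C R N xa :=
      subset_child ⟨hab, h⟩ ⟨hxa, le_rfl, hlt.le⟩ hXN ⟨hxb, hlt.le, le_rfl⟩
    exact hlt.ne ((childIndex_eq_childIndex_iff hR hC hN hNt i hxb hxa).2
      (child_eq_of_mem hC hN hNt hxa hxbK)).symm
  have hYN : Y ⊆ N := by
    obtain ⟨⟨u, huX, huY⟩, ⟨v, hvX, hvY⟩, -⟩ := hXY
    exact (hN.subset_or_subset hY ⟨u, hXN.subset huX, huY⟩).resolve_left
      fun h => hvY (h (hXN.subset hvX))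
  have hYcl := childClosed_of_overlap hC hN hNt hY hYN
    (fun z hz => childRange_childClosed hR hC hN hNt hz) hXY.symm.1 hXY.symm.2.1
  obtain ⟨c, d, hd, rfl⟩ := exists_eq_childRange hR hC hN hNt hY.1 hYN hYcl
    fun a ha b hb y hy => hY.2.2 a ha b hb y hy i
  exact ⟨c, d, ⟨hd, hY⟩, crosses_of_bowtie hXY⟩

lemma intervalFamily_childRange :
    IntervalFamily (children C R N).ncard
      fun a b => b < (children C R N).ncard ∧ IsCloneSet C R (childRange C R i N a b) where
  single j hj := by
    obtain ⟨x, hx, rfl⟩ := exists_childIndex_eq hR hC hN hNt i hj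
    exact ⟨hj, childRange_childIndex hR hC hN hNt hx ▸ (child_spec hC hN hNt hx).1.1⟩
  inter hab hcd h := ⟨hab.1, childRange_inter h ▸ hab.2.inter hcd.2
    (childRange_inter h ▸ childRange_nonempty hR hC hN hNt (h.2.1.trans_lt hab.1) le_rfl h.2.1)⟩
  diff_left hab hcd h := ⟨by unfold Crosses at h; omega,
    childRange_diff_left h ▸ hab.2.diff hR hcd.2 (bowtie_childRange hR hC hN hNt h hcd.1)⟩
  diff_right hab hcd h := ⟨hcd.1,
    childRange_diff_right h ▸ hcd.2.diff hR hab.2 (bowtie_childRange hR hC hN hNt h hcd.1).symm⟩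
  union hab hcd h := ⟨hcd.1, childRange_union h ▸ hab.2.union hcd.2
    (childRange_inter h ▸ childRange_nonempty hR hC hN hNt (h.2.1.trans_lt hab.1) le_rfl h.2.1)⟩
  crossed hab hlt hk := exists_crosses_childRange hR hC hN hNt hab.2 hab.1 hlt hk

theorem isCloneSet_of_isQNode (hQ : IsQNode C R N) (hX : X.Nonempty) (hXN : X ⊆ N)
    (hXcl : ∀ z ∈ X, child C R N z ⊆ X) (hXi : ∀ a ∈ X, ∀ b ∈ X, ∀ y ∈ C \ X, (R i a y ↔ R i b y)) :
    IsCloneSet C R X := by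
  obtain ⟨Y, Z, hY, hZ, hYZ, hYZN⟩ := hQ
  have hrep : ∀ V, IsCloneSet C R V → (∀ z ∈ V, child C R N z ⊆ V) → V ⊆ N →
      ∃ a b, b < (children C R N).ncard ∧ V = childRange C R i N a b := fun V hV hVcl hVN =>
    exists_eq_childRange hR hC hN hNt hV.1 hVN hVcl fun a ha b hb y hy => hV.2.2 a ha b hb y hy i
  obtain ⟨a, b, hb, rfl⟩ := hrep Y hY (childClosed_of_bowtie_of_union_eq hC hN hNt hY hZ hYZ hYZN)
    (hYZN ▸ Set.subset_union_left)
  obtain ⟨c, d, hd, rfl⟩ := hrep Z hZ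
    (childClosed_of_bowtie_of_union_eq hC hN hNt hZ hY hYZ.symm (Set.union_comm Z _ ▸ hYZN))
    (hYZN ▸ Set.subset_union_right)
  have hcov : ∀ j < (children C R N).ncard, (a ≤ j ∧ j ≤ b) ∨ (c ≤ j ∧ j ≤ d) := by
    intro j hj
    obtain ⟨z, hz, rfl⟩ := exists_childIndex_eq hR hC hN hNt i hj
    rcases hYZN.symm.subset hz with h | h
    exacts [Or.inl h.2, Or.inr h.2]
  obtain ⟨p, q, hq, rfl⟩ := exists_eq_childRange hR hC hN hNt hX hXN hXcl hXi
  obtain ⟨z, -, hpz, hzq⟩ := hX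
  have H := intervalFamily_childRange hR hC hN hNt (i := i)
  rcases crosses_of_bowtie hYZ with h | h
  · exact (H.mem_of_crosses ⟨hb, hY⟩ ⟨hd, hZ⟩ h hd hcov (hpz.trans hzq) hq).2
  · exact (H.mem_of_crosses ⟨hd, hZ⟩ ⟨hb, hY⟩ h hb (fun j hj => (hcov j hj).symm)
      (hpz.trans hzq) hq).2

end QNode

open Classical in
noncomputable def flipOffset (C : Set α) {n : ℕ} (R : Fin n → α → α → Prop) (i : Fin n)
    (N : Set α) (c d : α) : ℕ :=
  if IsQNode C R N then 0 else childIndex C R i N c + childIndex C R i N d + 1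

/-- The window `2 * C.ncard + 2` exceeds every offset, so that pairs with a smaller least strong
clone flip strictly earlier. -/
noncomputable def flipTime (C : Set α) {n : ℕ} (R : Fin n → α → α → Prop) (i : Fin n)
    (c d : α) : ℕ :=
  (2 * C.ncard + 2) * (strongHull C R {c, d}).ncard + flipOffset C R i (strongHull C R {c, d}) c d

section FlipTime

variable {C : Set α} {n : ℕ} {R : Fin n → α → α → Prop} {i : Fin n} {N X : Set α} {a b c d y : α}

lemma flipTime_comm (c d : α) : flipTime C R i c d = flipTime C R i d c := by
  unfold flipTime flipOffset
  rw [Set.pair_comm c d]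
  split_ifs <;> ring

lemma flipOffset_lt (hC : C.Finite) (hNC : N ⊆ C) (c d : α) :
    flipOffset C R i N c d < 2 * C.ncard + 2 := by
  have hle : ∀ x, childIndex C R i N x ≤ C.ncard := fun x =>
    calc childIndex C R i N x ≤ (children C R N).ncard :=
          Set.ncard_le_ncard (Set.sep_subset _ _) ((hC.subset hNC).image _)
      _ ≤ N.ncard := Set.ncard_image_le (hC.subset hNC)
      _ ≤ C.ncard := Set.ncard_le_ncard hNC hC
  have := hle c
  have := hle d
  unfold flipOffset
  split_ifs <;> omega

lemma strongHull_pair_spec (hC : C.Finite) (hc : c ∈ C) (hd : d ∈ C) :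
    IsStrongClone C R (strongHull C R {c, d}) ∧ c ∈ strongHull C R {c, d} ∧
      d ∈ strongHull C R {c, d} :=
  ⟨isStrongClone_strongHull hC (Set.insert_nonempty c {d}) (Set.pair_subset hc hd),
    subset_strongHull (Set.mem_insert c {d}), subset_strongHull (Set.mem_insert_of_mem c rfl)⟩

lemma flipTime_div (hC : C.Finite) (hc : c ∈ C) (hd : d ∈ C) :
    flipTime C R i c d / (2 * C.ncard + 2) = (strongHull C R {c, d}).ncard := by
  rw [flipTime, Nat.mul_add_div (by omega), Nat.div_eq_of_lt
    (flipOffset_lt hC (strongHull_pair_spec hC hc hd).1.1.2.1 c d), add_zero]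

lemma flipTime_lt (hC : C.Finite) (hc : c ∈ C) (hd : d ∈ C) :
    flipTime C R i c d < (2 * C.ncard + 2) * (C.ncard + 1) := by
  have hNC := (strongHull_pair_spec (R := R) hC hc hd).1.1.2.1
  have := flipOffset_lt (R := R) (i := i) hC hNC c d
  have := Set.ncard_le_ncard hNC hC
  rw [flipTime]
  nlinarith

lemma strongHull_pair_eq_of_flipTime_eq (hC : C.Finite) (ha : a ∈ C) (hb : b ∈ C) (hd : d ∈ C)
    (h : flipTime C R i a d = flipTime C R i b d) :
    strongHull C R {a, d} = strongHull C R {b, d} := by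
  obtain ⟨hNa, -, hdNa⟩ := strongHull_pair_spec (R := R) hC ha hd
  obtain ⟨hNb, -, hdNb⟩ := strongHull_pair_spec (R := R) hC hb hd
  have hcard : (strongHull C R {a, d}).ncard = (strongHull C R {b, d}).ncard := by
    rw [← flipTime_div (i := i) hC ha hd, ← flipTime_div (i := i) hC hb hd, h]
  rcases hNa.subset_or_subset hNb.1 ⟨d, hdNa, hdNb⟩ with hab | hba
  · exact Set.eq_of_subset_of_ncard_le hab hcard.ge (hC.subset hNb.1.2.1)
  · exact (Set.eq_of_subset_of_ncard_le hba hcard.le (hC.subset hNa.1.2.1)).symm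

lemma flipTime_eq_of_strongHull_eq (h : strongHull C R {c, d} = N) :
    flipTime C R i c d = (2 * C.ncard + 2) * N.ncard + flipOffset C R i N c d := by
  rw [flipTime, h]

lemma flipTime_eq_flipTime (hN : strongHull C R {a, y} = strongHull C R {b, y})
    (h : IsQNode C R (strongHull C R {a, y}) ∨
      child C R (strongHull C R {a, y}) a = child C R (strongHull C R {a, y}) b) :
    flipTime C R i a y = flipTime C R i b y := by
  unfold flipTime flipOffset
  rw [← hN]
  rcases h with h | h
  · simp only [h, if_true]
  · simp only [childIndex, h]

lemma child_eq_of_strongHull_ssubset (hC : C.Finite) (hN : IsStrongClone C R N)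
    (hNt : N.Nontrivial) (hc : c ∈ N) (hd : d ∈ N) (h : strongHull C R {c, d} ⊂ N) :
    child C R N d = child C R N c := by
  obtain ⟨hH, hcH, hdH⟩ := strongHull_pair_spec (R := R) hC (hN.1.2.1 hc) (hN.1.2.1 hd)
  exact child_eq_of_mem hC hN hNt hc (subset_child hH hcH h hdH)

lemma flipTime_eq_of_strongHull_ssubset {e : α} (hC : C.Finite) (hc : c ∈ C) (hd : d ∈ C)
    (he : e ∈ C) (hdN : d ∈ strongHull C R {c, e})
    (h : strongHull C R {c, d} ⊂ strongHull C R {c, e}) :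
    flipTime C R i c e = flipTime C R i d e := by
  obtain ⟨hN, hcN, heN⟩ := strongHull_pair_spec (R := R) hC hc he
  obtain ⟨hNcd, hcNcd, hdNcd⟩ := strongHull_pair_spec (R := R) hC hc hd
  obtain ⟨hNde, hdNde, heNde⟩ := strongHull_pair_spec (R := R) hC hd he
  obtain ⟨w, hwN, hwcd⟩ := Set.exists_of_ssubset h
  have hNt : (strongHull C R {c, e}).Nontrivial := ⟨c, hcN, w, hwN, fun h => hwcd (h ▸ hcNcd)⟩
  have hde : strongHull C R {d, e} = strongHull C R {c, e} := by
    refine (strongHull_subset hN (Set.pair_subset hdN heN)).antisymm ?_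
    rcases hNcd.subset_or_subset hNde.1 ⟨d, hdNcd, hdNde⟩ with hsub | hsub
    · exact strongHull_subset hNde (Set.pair_subset (hsub hcNcd) heNde)
    · exact absurd (strongHull_subset hNcd (Set.pair_subset hcNcd (hsub heNde))) h.not_subset
  exact flipTime_eq_flipTime hde.symm
    (Or.inr (child_eq_of_strongHull_ssubset hC hN hNt hcN hdN h).symm)

lemma child_ne_child_strongHull (hC : C.Finite) (hc : c ∈ C) (hd : d ∈ C) (hcd : c ≠ d) :
    child C R (strongHull C R {c, d}) c ≠ child C R (strongHull C R {c, d}) d := by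
  obtain ⟨hN, hcN, hdN⟩ := strongHull_pair_spec (R := R) hC hc hd
  have hNt : (strongHull C R {c, d}).Nontrivial := ⟨c, hcN, d, hdN, hcd⟩
  intro h
  obtain ⟨hK, hcK, hKN⟩ := child_spec hC hN hNt hcN
  have hdK := h ▸ (child_spec hC hN hNt hdN).2.1
  exact hKN.not_subset (strongHull_subset hK (Set.pair_subset hcK hdK))

variable (hR : IsProfile C R) (hC : C.Finite)
include hR hC

lemma flipTime_between {e : α} (hc : c ∈ C) (hd : d ∈ C) (he : e ∈ C) (hcd : R i c d)
    (hde : R i d e) :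
    min (flipTime C R i c d) (flipTime C R i d e) ≤ flipTime C R i c e ∧
      flipTime C R i c e ≤ max (flipTime C R i c d) (flipTime C R i d e) := by
  obtain ⟨hN, hcN, heN⟩ := strongHull_pair_spec (R := R) hC hc he
  have hdN := (hR.2 i).mem_of_between hN.1.2.1
    (fun a ha b hb y hy => hN.1.2.2 a ha b hb y hy i) hcN heN hd hcd hde
  have hcd_sub := strongHull_subset (R := R) hN (Set.pair_subset hcN hdN)
  have hde_sub := strongHull_subset (R := R) hN (Set.pair_subset hdN heN)
  by_cases h₁ : strongHull C R {c, d} = strongHull C R {c, e}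
  swap
  · rw [flipTime_eq_of_strongHull_ssubset hC hc hd he hdN (hcd_sub.ssubset_of_ne h₁)]
    omega
  by_cases h₂ : strongHull C R {d, e} = strongHull C R {c, e}
  swap
  · rw [Set.pair_comm c e] at hdN hde_sub h₂
    rw [Set.pair_comm d e] at hde_sub h₂
    rw [flipTime_comm c e, flipTime_comm c d,
      flipTime_eq_of_strongHull_ssubset hC he hd hc hdN (hde_sub.ssubset_of_ne h₂)]
    omega
  generalize hNdef : strongHull C R {c, e} = N at hN hcN heN hdN h₁ h₂
  have hNt : N.Nontrivial := ⟨c, hcN, e, heN, (hR.2 i).ne hc ((hR.2 i).2.1 c hc d hd e he hcd hde)⟩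
  rw [flipTime_eq_of_strongHull_eq h₁, flipTime_eq_of_strongHull_eq h₂,
    flipTime_eq_of_strongHull_eq hNdef]
  by_cases hQ : IsQNode C R N
  · simp only [flipOffset, if_pos hQ]
    omega
  have hlt₁ := childIndex_lt_of_rel hR hC hN hNt i hcN hdN hcd
    (h₁ ▸ child_ne_child_strongHull hC hc hd ((hR.2 i).ne hc hcd))
  have hlt₂ := childIndex_lt_of_rel hR hC hN hNt i hdN heN hde
    (h₂ ▸ child_ne_child_strongHull hC hd he ((hR.2 i).ne hd hde))
  simp only [flipOffset, if_neg hQ]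
  omega

omit hR in
lemma flipTime_eq_of_isCloneSet (hX : IsCloneSet C R X) (ha : a ∈ X) (hb : b ∈ X)
    (hy : y ∈ C \ X) : flipTime C R i a y = flipTime C R i b y := by
  have hsub : ∀ x ∈ X, X ⊆ strongHull C R {x, y} := fun x hx => by
    obtain ⟨hN, hxN, hyN⟩ := strongHull_pair_spec (R := R) hC (hX.2.1 hx) hy.1
    exact (hN.subset_or_subset hX ⟨x, hxN, hx⟩).resolve_left fun h => hy.2 (h hyN)
  obtain ⟨hNa, haN, hyNa⟩ := strongHull_pair_spec (R := R) hC (hX.2.1 ha) hy.1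
  obtain ⟨hNb, -, hyNb⟩ := strongHull_pair_spec (R := R) hC (hX.2.1 hb) hy.1
  have heq : strongHull C R {a, y} = strongHull C R {b, y} :=
    (strongHull_subset hNb (Set.pair_subset (hsub b hb ha) hyNb)).antisymm
      (strongHull_subset hNa (Set.pair_subset (hsub a ha hb) hyNa))
  refine flipTime_eq_flipTime heq (or_iff_not_imp_left.2 fun hQ => ?_)
  have hXN : X ⊂ strongHull C R {a, y} := (hsub a ha).ssubset_of_ne fun h => hy.2 (h ▸ hyNa)
  have hNt : (strongHull C R {a, y}).Nontrivial := ⟨a, haN, y, hyNa, fun h => hy.2 (h ▸ ha)⟩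
  exact (child_eq_of_mem hC hNa hNt haN (subset_child_of_not_isQNode hC hNa hQ hX hXN ha hb)).symm

lemma isCloneSet_of_flipTime_eq (hX : X.Nonempty) (hXC : X ⊆ C)
    (hXi : ∀ a ∈ X, ∀ b ∈ X, ∀ y ∈ C \ X, (R i a y ↔ R i b y))
    (hXτ : ∀ a ∈ X, ∀ b ∈ X, ∀ y ∈ C \ X, flipTime C R i a y = flipTime C R i b y) :
    IsCloneSet C R X := by
  obtain ⟨x₀, hx₀⟩ := hX
  set N := strongHull C R X
  have hN : IsStrongClone C R N := isStrongClone_strongHull hC ⟨x₀, hx₀⟩ hXC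
  have hXN : X ⊆ N := subset_strongHull
  by_cases hNX : N ⊆ X
  · exact hXN.antisymm hNX ▸ hN.1
  obtain ⟨y, hyN, hyX⟩ := Set.not_subset.1 hNX
  have hNt : N.Nontrivial := ⟨x₀, hXN hx₀, y, hyN, fun h => hyX (h ▸ hx₀)⟩
  -- equal flip times force equal least strong clones, which must then be `N`
  have hhull : ∀ z ∈ N, z ∉ X → ∀ a ∈ X, strongHull C R {a, z} = N := by
    intro z hzN hzX a ha
    have hzC := hN.1.2.1 hzN
    have hXa : X ⊆ strongHull C R {a, z} := fun b hb =>
      strongHull_pair_eq_of_flipTime_eq hC (hXC hb) (hXC ha) hzC (hXτ b hb a ha z ⟨hzC, hzX⟩) ▸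
        (strongHull_pair_spec hC (hXC hb) hzC).2.1
    exact (strongHull_subset hN (Set.pair_subset (hXN ha) hzN)).antisymm
      (strongHull_subset (strongHull_pair_spec hC (hXC ha) hzC).1 hXa)
  by_cases hQ : IsQNode C R N
  · refine isCloneSet_of_isQNode hR hC hN hNt hQ ⟨x₀, hx₀⟩ hXN (fun z hz w hw => ?_) hXi
    by_contra hwX
    obtain ⟨hK, hzK, hKN⟩ := child_spec hC hN hNt (hXN hz)
    have h := strongHull_subset hK (Set.pair_subset hzK hw)
    rw [hhull w (hKN.subset hw) hwX z hz] at h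
    exact hKN.not_subset h
  have hyC := hN.1.2.1 hyN
  have hXK : X ⊆ child C R N x₀ := fun b hb => by
    have h := hXτ b hb x₀ hx₀ y ⟨hyC, hyX⟩
    rw [flipTime_eq_of_strongHull_eq (hhull y hyN hyX b hb),
      flipTime_eq_of_strongHull_eq (hhull y hyN hyX x₀ hx₀)] at h
    simp only [flipOffset, if_neg hQ] at h
    have := (childIndex_eq_childIndex_iff hR hC hN hNt i (hXN hb) (hXN hx₀)).1 (by omega)
    exact this ▸ (child_spec hC hN hNt (hXN hb)).2.1
  obtain ⟨hK, -, hKN⟩ := child_spec hC hN hNt (hXN hx₀)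
  exact absurd (strongHull_subset hK hXK) hKN.not_subset

theorem isCloneSet_iff_flipTime :
    IsCloneSet C R X ↔ X.Nonempty ∧ X ⊆ C ∧
      ∀ a ∈ X, ∀ b ∈ X, ∀ y ∈ C \ X,
        (R i a y ↔ R i b y) ∧ flipTime C R i a y = flipTime C R i b y :=
  ⟨fun hX => ⟨hX.1, hX.2.1, fun a ha b hb y hy =>
      ⟨hX.2.2 a ha b hb y hy i, flipTime_eq_of_isCloneSet hC hX ha hb hy⟩⟩,
    fun ⟨hX, hXC, h⟩ => isCloneSet_of_flipTime_eq hR hC hX hXC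
      (fun a ha b hb y hy => (h a ha b hb y hy).1) fun a ha b hb y hy => (h a ha b hb y hy).2⟩

end FlipTime

theorem clone_structure_single_crossing_implementable (C : Set α) (hC : C.Finite)
    (𝓒 : Set (Set α)) (h : IsCloneStructure C 𝓒) :
    ∃ (n : ℕ) (R : Fin n → α → α → Prop),
      IsProfile C R ∧ SingleCrossing C R ∧ 𝓒 = cloneSets C R := by
  obtain ⟨n, R, hR, rfl⟩ := h
  let i : Fin n := ⟨0, hR.1⟩
  let m := (2 * C.ncard + 2) * (C.ncard + 1)
  have hL := hR.2 i
  refine ⟨m + 1, fun t => flippedOrder (R i) (flipTime C R i) t,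
    ⟨m.succ_pos, fun t => flippedOrder_isLinOn hL flipTime_comm
      (fun c hc d hd e he => flipTime_between hR hC hc hd he) t⟩,
    flippedOrder_singleCrossing hL flipTime_comm _, Set.ext fun X => ?_⟩
  exact (isCloneSet_iff_flipTime hR hC).trans
    (isCloneSet_flippedOrder_iff hL fun c hc d hd => flipTime_lt hC hc hd).symm
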